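/- arXiv:1502.06901 — 4 statements merged into one kernel-verified Lean document; each statement's English description precedes it below -/
import Mathlib

section
/- In the correctly specified and strongly identified SMDP, a pair (σ,m) is a Berk-Nash equilibrium if and only if σ is an optimal strategy for the MDP with the true transition function Q and m is a stationary distribution for (σ,Q). -/
open scoped BigOperators Classical
open MeasureTheory

section BerkNash

variable {S X Θ : Type} [Fintype S] [Fintype X] [MeasurableSpace Θ]

/-- `m` is a probability distribution on `Gr(Γ) ⊆ S × X`. -/
def IsDistOn (Γ : S → Finset X) (m : S → X → ℝ) : Prop :=
  (∀ s x, 0 ≤ m s x) ∧ (∀ s x, x ∉ Γ s → m s x = 0) ∧ (∑ s, ∑ x, m s x = 1)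

/-- `σ` is a strategy: a distribution over feasible actions at each state. -/
def IsStrategy (Γ : S → Finset X) (σ : S → X → ℝ) : Prop :=
  (∀ s x, 0 ≤ σ s x) ∧ (∀ s x, x ∉ Γ s → σ s x = 0) ∧ (∀ s, ∑ x, σ s x = 1)

/-- `m` is a stationary distribution given `(σ, Q)`. -/
def IsStationarySMDP (Γ : S → Finset X) (Q : S → X → S → ℝ)
    (σ : S → X → ℝ) (m : S → X → ℝ) : Prop :=
  IsDistOn Γ m ∧ ∀ s' x', m s' x' = ∑ s, ∑ x, σ s' x' * Q s x s' * m s x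

/-- `σ` is an optimal strategy for the MDP with transition probability function `Q`:
there is a (Bellman) value function `V` such that `V s` is the maximal one-step value
and `σ` only puts weight on maximizing actions. (For `0 ≤ δ < 1` such a `V` is the
unique solution of the Bellman equation.) -/
def IsOptimalMDP (Γ : S → Finset X) (Q : S → X → S → ℝ)
    (π : S → X → S → ℝ) (δ : ℝ) (σ : S → X → ℝ) : Prop :=
  ∃ V : S → ℝ,
    (∀ s, ∀ x ∈ Γ s, (∑ s', Q s x s' * (π s x s' + δ * V s')) ≤ V s) ∧
    (∀ s, ∃ x ∈ Γ s, (∑ s', Q s x s' * (π s x s' + δ * V s')) = V s) ∧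
    (∀ s x, 0 < σ s x →
      x ∈ Γ s ∧ (∑ s', Q s x s' * (π s x s' + δ * V s')) = V s)

/-- Weighted Kullback-Leibler divergence (extended-real valued, with the usual
conventions) between the true `Q` and the subjective model `Q_θ`, weighted by `m`. -/
noncomputable def wKLD (Q : S → X → S → ℝ) (Qθ : Θ → S → X → S → ℝ)
    (m : S → X → ℝ) (θ : Θ) : EReal :=
  ∑ s, ∑ x, ∑ s',
    if m s x = 0 ∨ Q s x s' = 0 then (0 : EReal)
    else if Qθ θ s x s' = 0 then (⊤ : EReal)
    else ((m s x * (Q s x s' * Real.log (Q s x s' / Qθ θ s x s'))) : ℝ)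

/-- The set `Θ_Q(m)` of closest parameter values given `m`. -/
def ThetaQ (Q : S → X → S → ℝ) (Qθ : Θ → S → X → S → ℝ)
    (m : S → X → ℝ) : Set Θ :=
  {θ | ∀ θ', wKLD Q Qθ m θ ≤ wKLD Q Qθ m θ'}

/-- `(σ, m)` is a Berk-Nash equilibrium of the SMDP `(Q, {Q_θ})`: there is a belief
`μ ∈ Δ(Θ)` such that (i) `σ` is optimal for the MDP with transition `Q̄_μ = ∫ Q_θ dμ`,
(ii) `μ` puts probability one on `Θ_Q(m)`, and (iii) `m` is stationary given `(σ,Q)`. -/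
def IsBerkNash (Γ : S → Finset X) (Q : S → X → S → ℝ)
    (Qθ : Θ → S → X → S → ℝ) (π : S → X → S → ℝ) (δ : ℝ)
    (σ : S → X → ℝ) (m : S → X → ℝ) : Prop :=
  ∃ μ : Measure Θ, IsProbabilityMeasure μ ∧
    IsOptimalMDP Γ (fun s x s' => ∫ θ, Qθ θ s x s' ∂μ) π δ σ ∧
    μ {θ | θ ∈ ThetaQ Q Qθ m} = 1 ∧
    IsStationarySMDP Γ Q σ m

end BerkNash

/-! Correct specification gives `θ*` with `Q_{θ*} = Q`, and Gibbs' inequality `K_Q(m, ·) ≥ 0`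
(from `log y ≥ 1 - 1/y`) puts `θ*` into `Θ_Q(m)` for every `m`. Strong identification then
forces `Q_θ = Q` for every `θ ∈ Θ_Q(m)`, so every belief concentrated on `Θ_Q(m)` has
`Q̄_μ = Q`. Conversely, the Dirac belief at `θ*` is concentrated on `Θ_Q(m)` and has
`Q̄_μ = Q`. -/

@[norm_cast]
lemma EReal.coe_finset_sum {α : Type*} (t : Finset α) (f : α → ℝ) :
    ((∑ a ∈ t, f a : ℝ) : EReal) = ∑ a ∈ t, (f a : EReal) :=
  map_sum (⟨⟨(↑), EReal.coe_zero⟩, EReal.coe_add⟩ : ℝ →+ EReal) f t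

lemma Real.sub_le_mul_log_div {p q : ℝ} (hp : 0 < p) (hq : 0 < q) :
    p - q ≤ p * Real.log (p / q) := by
  have h := Real.one_sub_inv_le_log_of_pos (div_pos hp hq)
  rw [inv_div] at h
  calc p - q = p * (1 - q / p) := by field_simp
    _ ≤ p * Real.log (p / q) := mul_le_mul_of_nonneg_left h hp.le

lemma integral_eq_of_forall_mem_eq {α : Type*} [MeasurableSpace α] {f : α → ℝ}
    (hf : Measurable f) {μ : Measure α} [IsProbabilityMeasure μ] {A : Set α} (hA : μ A = 1)
    {c : ℝ} (hfA : ∀ a ∈ A, f a = c) :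
    ∫ a, f a ∂μ = c := by
  refine integral_eq_const ((ae_iff_measure_eq ?_).mpr ?_)
  · exact (hf (measurableSet_singleton c)).nullMeasurableSet
  · rw [measure_univ]
    exact le_antisymm prob_le_one (hA ▸ measure_mono hfA)

lemma mean_transition_eq_of_measure_eq_one {S X Θ : Type*} [MeasurableSpace Θ]
    (Q : S → X → S → ℝ) (Qθ : Θ → S → X → S → ℝ)
    (hmeas : ∀ s x s', Measurable fun θ => Qθ θ s x s') {μ : Measure Θ}
    [IsProbabilityMeasure μ] {A : Set Θ} (hA : μ A = 1)
    (hQθA : ∀ θ ∈ A, ∀ s x s', Qθ θ s x s' = Q s x s') :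
    (fun s x s' => ∫ θ, Qθ θ s x s' ∂μ) = Q :=
  funext fun s => funext fun x => funext fun s' =>
    integral_eq_of_forall_mem_eq (hmeas s x s') hA fun θ hθ => hQθA θ hθ s x s'

section BerkNash

variable {S X Θ : Type} [Fintype S] [Fintype X]

lemma wKLD_ge_sum (Q : S → X → S → ℝ) (hQ0 : ∀ s x s', 0 ≤ Q s x s')
    (Qθ : Θ → S → X → S → ℝ) (hQθ0 : ∀ θ s x s', 0 ≤ Qθ θ s x s')
    (m : S → X → ℝ) (hm0 : ∀ s x, 0 ≤ m s x) (θ : Θ) :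
    ((∑ s, ∑ x, ∑ s', m s x * (Q s x s' - Qθ θ s x s') : ℝ) : EReal) ≤
      wKLD Q Qθ m θ := by
  push_cast
  refine Finset.sum_le_sum fun s _ => Finset.sum_le_sum fun x _ =>
    Finset.sum_le_sum fun s' _ => ?_
  split_ifs with hzero hθzero
  · rcases hzero with hm | hQ
    · simp [hm]
    · exact_mod_cast (by nlinarith [hm0 s x, hQθ0 θ s x s'] :
        m s x * (Q s x s' - Qθ θ s x s') ≤ 0)
  · exact le_top
  · push Not at hzero
    have hQpos := (hQ0 s x s').lt_of_ne' hzero.2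
    have hQθpos := (hQθ0 θ s x s').lt_of_ne' hθzero
    exact_mod_cast mul_le_mul_of_nonneg_left (Real.sub_le_mul_log_div hQpos hQθpos) (hm0 s x)

lemma wKLD_nonneg (Γ : S → Finset X) (Q : S → X → S → ℝ)
    (hQ0 : ∀ s x s', 0 ≤ Q s x s') (hQ1 : ∀ s, ∀ x ∈ Γ s, ∑ s', Q s x s' = 1)
    (Qθ : Θ → S → X → S → ℝ) (hQθ0 : ∀ θ s x s', 0 ≤ Qθ θ s x s')
    (hQθ1 : ∀ θ s, ∀ x ∈ Γ s, ∑ s', Qθ θ s x s' = 1)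
    (m : S → X → ℝ) (hm0 : ∀ s x, 0 ≤ m s x) (hmΓ : ∀ s x, x ∉ Γ s → m s x = 0)
    (θ : Θ) :
    0 ≤ wKLD Q Qθ m θ := by
  have hsum : ∑ s, ∑ x, ∑ s', m s x * (Q s x s' - Qθ θ s x s') = 0 := by
    refine Finset.sum_eq_zero fun s _ => Finset.sum_eq_zero fun x _ => ?_
    rw [← Finset.mul_sum, Finset.sum_sub_distrib]
    by_cases hx : x ∈ Γ s
    · rw [hQ1 s x hx, hQθ1 θ s x hx, sub_self, mul_zero]
    · rw [hmΓ s x hx, zero_mul]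
  simpa [hsum] using wKLD_ge_sum Q hQ0 Qθ hQθ0 m hm0 θ

lemma wKLD_eq_zero_of_eq (Q : S → X → S → ℝ) (Qθ : Θ → S → X → S → ℝ)
    (m : S → X → ℝ) {θ : Θ} (hθ : ∀ s x s', Qθ θ s x s' = Q s x s') :
    wKLD Q Qθ m θ = 0 := by
  refine Finset.sum_eq_zero fun s _ => Finset.sum_eq_zero fun x _ =>
    Finset.sum_eq_zero fun s' _ => ?_
  rw [hθ]
  split_ifs with hzero hQ
  · rfl
  · exact absurd hQ (not_or.mp hzero).2
  · simp [div_self (not_or.mp hzero).2]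

lemma mem_ThetaQ_of_eq (Γ : S → Finset X) (Q : S → X → S → ℝ)
    (hQ0 : ∀ s x s', 0 ≤ Q s x s') (hQ1 : ∀ s, ∀ x ∈ Γ s, ∑ s', Q s x s' = 1)
    (Qθ : Θ → S → X → S → ℝ) (hQθ0 : ∀ θ s x s', 0 ≤ Qθ θ s x s')
    (hQθ1 : ∀ θ s, ∀ x ∈ Γ s, ∑ s', Qθ θ s x s' = 1)
    {m : S → X → ℝ} (hm : IsDistOn Γ m) {θ : Θ}
    (hθ : ∀ s x s', Qθ θ s x s' = Q s x s') :
    θ ∈ ThetaQ Q Qθ m := fun θ' => by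
  rw [wKLD_eq_zero_of_eq Q Qθ m hθ]
  exact wKLD_nonneg Γ Q hQ0 hQ1 Qθ hQθ0 hQθ1 m hm.1 hm.2.1 θ'

variable [MeasurableSpace Θ]

theorem berkNash_iff_optimal_of_correctly_specified_strongly_identified_general
    (Γ : S → Finset X)
    (Q : S → X → S → ℝ)
    (hQ0 : ∀ s x s', 0 ≤ Q s x s')
    (hQ1 : ∀ s, ∀ x ∈ Γ s, ∑ s', Q s x s' = 1)
    (Qθ : Θ → S → X → S → ℝ)
    (hQθ0 : ∀ θ s x s', 0 ≤ Qθ θ s x s')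
    (hQθ1 : ∀ θ s, ∀ x ∈ Γ s, ∑ s', Qθ θ s x s' = 1)
    (hmeas : ∀ s x s', Measurable fun θ => Qθ θ s x s')
    (π : S → X → S → ℝ) (δ : ℝ)
    -- correctly specified
    (hcorrect : ∃ θstar : Θ, ∀ s x s', Qθ θstar s x s' = Q s x s')
    -- strongly identified
    (hident : ∀ m : S → X → ℝ, IsDistOn Γ m →
      ∀ θ₁ ∈ ThetaQ Q Qθ m, ∀ θ₂ ∈ ThetaQ Q Qθ m,
        ∀ s x s', Qθ θ₁ s x s' = Qθ θ₂ s x s')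
    (σ : S → X → ℝ) (m : S → X → ℝ) :
    IsBerkNash Γ Q Qθ π δ σ m ↔
      (IsOptimalMDP Γ Q π δ σ ∧ IsStationarySMDP Γ Q σ m) := by
  obtain ⟨θstar, hstar⟩ := hcorrect
  have hstar_mem {m : S → X → ℝ} (hm : IsDistOn Γ m) : θstar ∈ ThetaQ Q Qθ m :=
    mem_ThetaQ_of_eq Γ Q hQ0 hQ1 Qθ hQθ0 hQθ1 hm hstar
  constructor
  · rintro ⟨μ, hμ, hopt, hμΘ, hstat⟩
    have hQθΘ : ∀ θ ∈ ThetaQ Q Qθ m, ∀ s x s', Qθ θ s x s' = Q s x s' :=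
      fun θ hθ s x s' =>
        (hident m hstat.1 θ hθ θstar (hstar_mem hstat.1) s x s').trans (hstar s x s')
    rw [mean_transition_eq_of_measure_eq_one Q Qθ hmeas hμΘ hQθΘ] at hopt
    exact ⟨hopt, hstat⟩
  · rintro ⟨hopt, hstat⟩
    have hmean := mean_transition_eq_of_measure_eq_one Q Qθ hmeas
      (Measure.dirac_apply_of_mem (Set.mem_singleton θstar)) fun θ hθ => hθ ▸ hstar
    exact ⟨Measure.dirac θstar, inferInstance, hmean ▸ hopt,
      Measure.dirac_apply_of_mem (hstar_mem hstat.1), hstat⟩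

/-- In a correctly specified and strongly identified SMDP, `(σ,m)` is a
Berk-Nash equilibrium if and only if `σ` is optimal for the MDP with the true
transition probability function `Q` and `m` is a stationary distribution for `(σ,Q)`. -/
theorem berkNash_iff_optimal_of_correctly_specified_strongly_identified
    (Γ : S → Finset X) (hΓ : ∀ s, (Γ s).Nonempty)
    (Q : S → X → S → ℝ)
    (hQ0 : ∀ s x s', 0 ≤ Q s x s')
    (hQ1 : ∀ s, ∀ x ∈ Γ s, ∑ s', Q s x s' = 1)
    (Qθ : Θ → S → X → S → ℝ)
    (hQθ0 : ∀ θ s x s', 0 ≤ Qθ θ s x s')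
    (hQθ1 : ∀ θ s, ∀ x ∈ Γ s, ∑ s', Qθ θ s x s' = 1)
    (hmeas : ∀ s x s', Measurable fun θ => Qθ θ s x s')
    (π : S → X → S → ℝ) (δ : ℝ) (hδ0 : 0 ≤ δ) (hδ1 : δ < 1)
    -- correctly specified
    (hcorrect : ∃ θstar : Θ, ∀ s x s', Qθ θstar s x s' = Q s x s')
    -- strongly identified
    (hident : ∀ m : S → X → ℝ, IsDistOn Γ m →
      ∀ θ₁ ∈ ThetaQ Q Qθ m, ∀ θ₂ ∈ ThetaQ Q Qθ m,
        ∀ s x s', Qθ θ₁ s x s' = Qθ θ₂ s x s')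
    (σ : S → X → ℝ) (hσ : IsStrategy Γ σ) (m : S → X → ℝ) :
    IsBerkNash Γ Q Qθ π δ σ m ↔
      (IsOptimalMDP Γ Q π δ σ ∧ IsStationarySMDP Γ Q σ m) :=
  berkNash_iff_optimal_of_correctly_specified_strongly_identified_general Γ Q hQ0 hQ1 Qθ hQθ0 hQθ1
    hmeas π δ hcorrect hident σ m

end BerkNash
end

section
/- In the search model, if Cov(γ(Z),λ(Z)) < 0 and m_X(1) > 0, then θ_Q(m) < E[λ]: the misspecified worker's best-fitting belief about the offer-arrival probability is strictly below its true mean. -/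
/-- In the search model, if `Cov(γ,λ) = E[λγ] − E[λ]E[γ] < 0` and
`m_X(1) > 0`, then `θ_Q(m) = (E[λγ]m_X(1) + E[λ]m_X(0))/(E[γ]m_X(1) + m_X(0)) < E[λ]`:
the misspecified worker's best-fitting belief about the offer-arrival probability
is strictly below its true mean. -/
theorem search_belief_pessimistic
    (Eg El Elg m0 m1 : ℝ)
    (hEg : 0 < Eg)
    (hEl : 0 < El) (hEl1 : El < 1)
    (hElg0 : 0 ≤ Elg)
    (hCov : Elg - El * Eg < 0)
    (hm0 : 0 ≤ m0) (hm1 : 0 < m1) (hsum : m0 + m1 = 1) :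
    (Elg * m1 + El * m0) / (Eg * m1 + m0) < El := by
  have hden : 0 < Eg * m1 + m0 := by positivity
  rw [div_lt_iff₀ hden]
  nlinarith
end

section
/- The misspecified worker's reservation wage is strictly below the correctly specified one: if θ ≤ λ̄ and Cov(γ,λ) < 0, then the solution w(θ) of w(1−δ+δγ̄) = δθ(1−γ̄)g(w) is strictly less than the solution w* of w(1−δ+δγ̄) = δ(λ̄ − E[γλ])g(w), where g(w) = ∫_{w'>w}(w'−w)F(dw') (assuming g(w*) > 0). -/
/-- The misspecified worker's reservation wage is strictly below the
correctly specified one: if `θ ≤ λ̄` and `Cov(γ,λ) < 0`, then the solution `w` of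
`w(1−δ+δγ̄) = δθ(1−γ̄)g(w)` is strictly less than the solution `w*` of
`w*(1−δ+δγ̄) = δ(λ̄ − E[γλ])g(w*)`, where `E[γλ] = λ̄γ̄ + Cov(γ,λ)` and
`g(w) = ∫ t in w..1, (t−w)f(t)dt` (assuming `g(w*) > 0`). -/
theorem misspecified_reservation_wage_lower
    (δ γb lb Cov θ w wstar : ℝ)
    (hδ : δ ∈ Set.Ioo (0 : ℝ) 1) (hγ : γb ∈ Set.Ioo (0 : ℝ) 1)
    (hlb : lb ∈ Set.Ioo (0 : ℝ) 1)
    (hCov : Cov < 0) (hθ0 : 0 ≤ θ) (hθlb : θ ≤ lb)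
    (f : ℝ → ℝ) (hfc : Continuous f) (hf0 : ∀ t, 0 ≤ f t)
    (hfsupp : ∀ t, t ∉ Set.Icc (0 : ℝ) 1 → f t = 0)
    (hf1 : ∫ t in (0 : ℝ)..1, f t = 1)
    (hw : w ∈ Set.Icc (0 : ℝ) 1) (hwstar : wstar ∈ Set.Icc (0 : ℝ) 1)
    (heqw : w * (1 - δ + δ * γb) =
      δ * θ * (1 - γb) * ∫ t in w..1, (t - w) * f t)
    (heqwstar : wstar * (1 - δ + δ * γb) =
      δ * (lb - (lb * γb + Cov)) * ∫ t in wstar..1, (t - wstar) * f t)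
    (hgpos : 0 < ∫ t in wstar..1, (t - wstar) * f t) :
    w < wstar := by
  by_contra hle
  push_neg at hle  -- wstar ≤ w
  have hc : 0 < 1 - δ + δ * γb := by nlinarith [hδ.1, hδ.2, hγ.1]
  have hii : ∀ (c x y : ℝ), IntervalIntegrable (fun t => (t - c) * f t)
      MeasureTheory.volume x y :=
    fun c x y => ((continuous_id.sub continuous_const).mul hfc).intervalIntegrable x y
  -- monotonicity: g(w) ≤ g(wstar)
  have hw1 : w ≤ 1 := hw.2
  have hsplit : (∫ t in wstar..1, (t - wstar) * f t) =
      (∫ t in wstar..w, (t - wstar) * f t) + ∫ t in w..1, (t - wstar) * f t :=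
    (intervalIntegral.integral_add_adjacent_intervals (hii _ _ _) (hii _ _ _)).symm
  have h1 : 0 ≤ ∫ t in wstar..w, (t - wstar) * f t := by
    apply intervalIntegral.integral_nonneg hle
    intro t ht
    exact mul_nonneg (by linarith [ht.1]) (hf0 t)
  have h2 : (∫ t in w..1, (t - w) * f t) ≤ ∫ t in w..1, (t - wstar) * f t := by
    apply intervalIntegral.integral_mono_on hw1 (hii _ _ _) (hii _ _ _)
    intro t ht
    exact mul_le_mul_of_nonneg_right (by linarith) (hf0 t)
  have hmono : (∫ t in w..1, (t - w) * f t) ≤ ∫ t in wstar..1, (t - wstar) * f t := by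
    rw [hsplit]; linarith
  have hgw : 0 ≤ ∫ t in w..1, (t - w) * f t := by
    apply intervalIntegral.integral_nonneg hw1
    intro t ht
    exact mul_nonneg (by linarith [ht.1]) (hf0 t)
  -- coefficient comparison: δθ(1−γb) < δ(lb − (lb γb + Cov))
  have hk : δ * θ * (1 - γb) < δ * (lb - (lb * γb + Cov)) := by
    have h : θ * (1 - γb) < lb - (lb * γb + Cov) := by
      nlinarith [mul_nonneg (sub_nonneg.2 hθlb) (by linarith [hγ.2] : (0:ℝ) ≤ 1 - γb)]
    calc δ * θ * (1 - γb) = δ * (θ * (1 - γb)) := by ring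
      _ < δ * (lb - (lb * γb + Cov)) := mul_lt_mul_of_pos_left h hδ.1
  have hk1 : 0 ≤ δ * θ * (1 - γb) :=
    mul_nonneg (mul_nonneg hδ.1.le hθ0) (by linarith [hγ.2])
  have : w * (1 - δ + δ * γb) < wstar * (1 - δ + δ * γb) := by
    rw [heqw, heqwstar]
    calc δ * θ * (1 - γb) * ∫ t in w..1, (t - w) * f t
        ≤ δ * θ * (1 - γb) * ∫ t in wstar..1, (t - wstar) * f t :=
          mul_le_mul_of_nonneg_left hmono hk1
      _ < δ * (lb - (lb * γb + Cov)) * ∫ t in wstar..1, (t - wstar) * f t :=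
          mul_lt_mul_of_pos_right hk hgpos
  nlinarith [mul_nonneg (sub_nonneg.2 hle) hc.le]
end

section
/- In the stochastic growth example, the OLS-limit slope satisfies β̂(A) = β* + γ*·Cov(Z, ln A_Z)/(Var(ln A_Z) + Var(ln Y)); in particular, if γ* > 0 and A_H < A_L (so Cov(Z, ln A_Z) < 0), then β̂(A) < β*. -/
open MeasureTheory

/-- Covariance of two real random variables under a (probability) measure. -/
noncomputable def cov {Ω : Type} [MeasurableSpace Ω] (μ : Measure Ω)
    (f g : Ω → ℝ) : ℝ :=
  (∫ ω, f ω * g ω ∂μ) - (∫ ω, f ω ∂μ) * (∫ ω, g ω ∂μ)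

/-! The OLS slope is the omitted-variable-bias formula: by bilinearity of the covariance,
`Cov(ln Y', ln X) = β* Var(ln X) + γ* Cov(Z, ln X) + Cov(ξ, ln X)`, the last term vanishes, and
since `Y` is uncorrelated with `Z` and `A_Z`, `Var(ln X) = Var(ln A_Z) + Var(ln Y)` and
`Cov(Z, ln X) = Cov(Z, ln A_Z)`. -/

open ProbabilityTheory

theorem cov_comm {Ω : Type} [MeasurableSpace Ω] (μ : Measure Ω) (f g : Ω → ℝ) :
    cov μ f g = cov μ g f := by
  simp only [cov, mul_comm]

section Covariance

variable {Ω : Type} [MeasurableSpace Ω] {μ : Measure Ω} [IsProbabilityMeasure μ]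
  {f g h : Ω → ℝ}

theorem cov_eq_covariance (hf : MemLp f 2 μ) (hg : MemLp g 2 μ) :
    cov μ f g = cov[f, g; μ] :=
  (covariance_eq_sub hf hg).symm

theorem cov_add_right (hf : MemLp f 2 μ) (hg : MemLp g 2 μ) (hh : MemLp h 2 μ) :
    cov μ f (fun ω => g ω + h ω) = cov μ f g + cov μ f h := by
  have hgh : MemLp (fun ω => g ω + h ω) 2 μ := hg.add hh
  rw [cov_eq_covariance hf hgh, cov_eq_covariance hf hg, cov_eq_covariance hf hh]
  exact covariance_add_right hf hg hh

theorem cov_add_self_of_cov_eq_zero (hf : MemLp f 2 μ) (hg : MemLp g 2 μ)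
    (hfg : cov μ f g = 0) :
    cov μ (fun ω => f ω + g ω) (fun ω => f ω + g ω) = cov μ f f + cov μ g g := by
  have hsum : MemLp (fun ω => f ω + g ω) 2 μ := hf.add hg
  rw [cov_add_right hsum hf hg, cov_comm μ _ f, cov_comm μ _ g, cov_add_right hf hf hg,
    cov_add_right hg hf hg, cov_comm μ g f, hfg, add_zero, zero_add]

theorem cov_affine_left {X W ε : Ω → ℝ} (hX : MemLp X 2 μ) (hW : MemLp W 2 μ)
    (hε : MemLp ε 2 μ) (hf : MemLp f 2 μ) (α β γ : ℝ) :
    cov μ (fun ω => α + β * X ω + γ * W ω + ε ω) f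
      = β * cov μ X f + γ * cov μ W f + cov μ ε f := by
  have hlin : MemLp (β • X + γ • W + ε) 2 μ :=
    ((hX.const_smul β).add (hW.const_smul γ)).add hε
  have hshifted : MemLp (fun ω => α + (β • X + γ • W + ε) ω) 2 μ := (memLp_const α).add hlin
  have hshift :
      (fun ω => α + β * X ω + γ * W ω + ε ω) = fun ω => α + (β • X + γ • W + ε) ω := by
    funext ω; simp only [Pi.add_apply, Pi.smul_apply, smul_eq_mul]; ring
  rw [hshift, cov_eq_covariance hshifted hf,
    covariance_const_add_left (hlin.integrable one_le_two),
    covariance_add_left ((hX.const_smul β).add (hW.const_smul γ)) hε hf,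
    covariance_add_left (hX.const_smul β) (hW.const_smul γ) hf,
    covariance_smul_left, covariance_smul_left,
    cov_eq_covariance hX hf, cov_eq_covariance hW hf, cov_eq_covariance hε hf]

theorem ols_slope_of_linear_law {X W ε Y' : Ω → ℝ} (hX : MemLp X 2 μ) (hW : MemLp W 2 μ)
    (hε : MemLp ε 2 μ) {α β γ : ℝ} (hlaw : ∀ ω, Y' ω = α + β * X ω + γ * W ω + ε ω)
    (hεX : cov μ ε X = 0) (hXX : cov μ X X ≠ 0) :
    cov μ Y' X / cov μ X X = β + γ * cov μ W X / cov μ X X := by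
  rw [funext hlaw, cov_affine_left hX hW hε hX, hεX, add_zero, add_div,
    mul_div_cancel_right₀ _ hXX]

end Covariance

/-- In the stochastic growth example with true law
`ln Y' = α* + β* ln X + γ* Z + ξ`, where `ln X = ln A_Z + ln Y`, `ξ` has zero
covariance with `ln X`, and `Z` (hence `ln A_Z`) is independent of `Y` (zero
covariances), the OLS-limit slope satisfies
`β̂ = Cov(ln Y', ln X)/Var(ln X) = β* + γ*·Cov(Z, ln A_Z)/(Var(ln A_Z) + Var(ln Y))`;
in particular, if `γ* > 0` and `Cov(Z, ln A_Z) < 0` (as when `A_H < A_L`), then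
`β̂ < β*`. -/
theorem growth_ols_limit_slope
    {Ω : Type} [MeasurableSpace Ω] (μ : Measure Ω) [IsProbabilityMeasure μ]
    (lY lA Z ξ : Ω → ℝ)  -- ln Y, ln A_Z, the shock Z, and ξ
    (hlY : MeasureTheory.MemLp lY 2 μ) (hlA : MeasureTheory.MemLp lA 2 μ)
    (hZ : MeasureTheory.MemLp Z 2 μ) (hξ : MeasureTheory.MemLp ξ 2 μ)
    (αs βs γs : ℝ)
    (lY' : Ω → ℝ)
    (hlaw : ∀ ω, lY' ω = αs + βs * (lA ω + lY ω) + γs * Z ω + ξ ω)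
    -- ξ independent of (Y, Z): zero covariance with ln X and with Z
    (hξX : cov μ ξ (fun ω => lA ω + lY ω) = 0)
    -- Z (and hence ln A_Z) independent of Y
    (hZY : cov μ Z lY = 0) (hAY : cov μ lA lY = 0)
    -- nondegeneracy of ln X
    (hvar : 0 < cov μ lA lA + cov μ lY lY) :
    cov μ lY' (fun ω => lA ω + lY ω) / cov μ (fun ω => lA ω + lY ω) (fun ω => lA ω + lY ω)
        = βs + γs * cov μ Z lA / (cov μ lA lA + cov μ lY lY) ∧
    (0 < γs → cov μ Z lA < 0 →
      cov μ lY' (fun ω => lA ω + lY ω) /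
          cov μ (fun ω => lA ω + lY ω) (fun ω => lA ω + lY ω) < βs) := by
  have hXX := cov_add_self_of_cov_eq_zero hlA hlY hAY
  have hZX : cov μ Z (fun ω => lA ω + lY ω) = cov μ Z lA := by
    rw [cov_add_right hZ hlA hlY, hZY, add_zero]
  have hslope := ols_slope_of_linear_law (X := fun ω => lA ω + lY ω) (hlA.add hlY) hZ hξ
    hlaw hξX (hXX ▸ hvar.ne')
  rw [hXX, hZX] at hslope
  rw [hXX]
  refine ⟨hslope, fun hγ hZA => ?_⟩
  rw [hslope]
  exact add_lt_of_neg_right _ (div_neg_of_neg_of_pos (mul_neg_of_pos_of_neg hγ hZA) hvar)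
end
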